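/- Fix Δ > 0. Then lim_{σ → ∞} σ·( V(σ, Δ) − σ/√(2π) + Δ/2 ) = Δ²/(2√(2π)). In particular V(σ, Δ) = σ/√(2π) − Δ/2 + Δ²/(2σ√(2π)) + o(1/σ), so the catalytic value scales linearly with uncertainty in the high-uncertainty limit. (Proposition 1, part 2.) -/
import Mathlib


open MeasureTheory

/-- The standard normal density `φ`. -/
noncomputable def stdNormalPDF (x : ℝ) : ℝ :=
  (Real.sqrt (2 * Real.pi))⁻¹ * Real.exp (-x ^ 2 / 2)

/-- The standard normal CDF `Φ`. -/
noncomputable def stdNormalCDF (x : ℝ) : ℝ :=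
  ∫ t in Set.Iic x, stdNormalPDF t

/-- The catalytic value `V(σ, Δ) = -Δ·Φ(-Δ/σ) + σ·φ(-Δ/σ)`. -/
noncomputable def catalyticValue (σ Δ : ℝ) : ℝ :=
  -Δ * stdNormalCDF (-Δ / σ) + σ * stdNormalPDF (-Δ / σ)

open Filter Topology

lemma stdNormalPDF_eq (x : ℝ) :
    stdNormalPDF x = (Real.sqrt (2 * Real.pi))⁻¹ * Real.exp (-(1/2 : ℝ) * x ^ 2) := by
  unfold stdNormalPDF; ring_nf

lemma integrable_stdNormalPDF : Integrable stdNormalPDF := by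
  have h : Integrable (fun x : ℝ => Real.exp (-(1/2 : ℝ) * x ^ 2)) :=
    integrable_exp_neg_mul_sq (by norm_num)
  have := h.const_mul (Real.sqrt (2 * Real.pi))⁻¹
  refine this.congr ?_
  filter_upwards with x using (stdNormalPDF_eq x).symm

lemma integral_stdNormalPDF : ∫ x, stdNormalPDF x = 1 := by
  have : (∫ x, stdNormalPDF x) =
      (Real.sqrt (2 * Real.pi))⁻¹ * ∫ x, Real.exp (-(1/2 : ℝ) * x ^ 2) := by
    rw [← integral_const_mul]
    exact integral_congr_ae (Filter.Eventually.of_forall stdNormalPDF_eq)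
  rw [this, integral_gaussian]
  have h2π : (0:ℝ) < 2 * Real.pi := by positivity
  rw [show Real.pi / (1/2 : ℝ) = 2 * Real.pi by ring]
  field_simp

lemma stdNormalCDF_zero : stdNormalCDF 0 = 1 / 2 := by
  have hint := integrable_stdNormalPDF
  have hsplit : (∫ x in Set.Iic (0:ℝ), stdNormalPDF x) +
      ∫ x in Set.Ioi (0:ℝ), stdNormalPDF x = 1 := by
    have : (∫ x, stdNormalPDF x) = (∫ x in Set.Iic (0:ℝ), stdNormalPDF x) +
        ∫ x in Set.Ioi (0:ℝ), stdNormalPDF x := by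
      rw [← setIntegral_univ, ← Set.Iic_union_Ioi (a := (0:ℝ)),
        setIntegral_union (Set.Iic_disjoint_Ioi le_rfl) measurableSet_Ioi
          hint.integrableOn hint.integrableOn]
    rw [← this, integral_stdNormalPDF]
  have hsym : (∫ x in Set.Iic (0:ℝ), stdNormalPDF x) =
      ∫ x in Set.Ioi (0:ℝ), stdNormalPDF x := by
    have := integral_comp_neg_Iic (0:ℝ) stdNormalPDF
    simp only [neg_zero] at this
    rw [← this]
    refine setIntegral_congr_fun measurableSet_Iic ?_
    intro x _
    simp [stdNormalPDF, neg_sq]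
  unfold stdNormalCDF
  linarith [hsplit, hsym]

lemma continuous_stdNormalPDF : Continuous stdNormalPDF := by
  unfold stdNormalPDF; fun_prop

lemma hasDerivAt_stdNormalCDF : HasDerivAt stdNormalCDF (stdNormalPDF 0) 0 := by
  have hint := integrable_stdNormalPDF
  have key : ∀ y : ℝ, stdNormalCDF y = stdNormalCDF (-1) + ∫ t in (-1:ℝ)..y, stdNormalPDF t := by
    intro y
    have := intervalIntegral.integral_Iic_sub_Iic (μ := volume) (f := stdNormalPDF)
      (a := (-1:ℝ)) (b := y) hint.integrableOn hint.integrableOn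
    unfold stdNormalCDF
    linarith [this]
  have hD : HasDerivAt (fun u => stdNormalCDF (-1) + ∫ t in (-1:ℝ)..u, stdNormalPDF t)
      (stdNormalPDF 0) 0 := by
    refine HasDerivAt.const_add _ ?_
    exact intervalIntegral.integral_hasDerivAt_right hint.intervalIntegrable
      (continuous_stdNormalPDF.stronglyMeasurableAtFilter _ _)
      continuous_stdNormalPDF.continuousAt
  exact hD.congr_of_eventuallyEq (Filter.Eventually.of_forall key)

/-- High-uncertainty asymptotics (Proposition 1, part 2): for fixed `Δ > 0`,
`σ·(V(σ,Δ) - σ/√(2π) + Δ/2) → Δ²/(2√(2π))` as `σ → ∞`, i.e.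
`V(σ,Δ) = σ/√(2π) - Δ/2 + Δ²/(2σ√(2π)) + o(1/σ)`. -/
theorem catalyticValue_high_uncertainty_limit (Δ : ℝ) (hΔ : 0 < Δ) :
    Tendsto
      (fun σ : ℝ =>
        σ * (catalyticValue σ Δ - σ / Real.sqrt (2 * Real.pi) + Δ / 2))
      atTop (𝓝 (Δ ^ 2 / (2 * Real.sqrt (2 * Real.pi)))) := by
  set c : ℝ := (Real.sqrt (2 * Real.pi))⁻¹ with hc
  have hπ : (0:ℝ) < Real.sqrt (2 * Real.pi) := Real.sqrt_pos.mpr (by positivity)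
  -- the function of x = Δ/σ
  set g : ℝ → ℝ := fun x => Δ ^ 2 *
    ((stdNormalCDF 0 - stdNormalCDF (-x)) / x + c * ((Real.exp (-x ^ 2 / 2) - 1) / x ^ 2))
    with hg
  -- map x ↦ -x on punctured nbhd of 0
  have hnegmap : Tendsto (fun x : ℝ => -x) (𝓝[≠] (0:ℝ)) (𝓝[≠] (0:ℝ)) := by
    rw [tendsto_nhdsWithin_iff]
    constructor
    · simpa using (continuous_neg.tendsto (0:ℝ)).mono_left nhdsWithin_le_nhds
    · filter_upwards [self_mem_nhdsWithin] with x hx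
      simpa using hx
  -- piece 1
  have h1 : Tendsto (fun x : ℝ => (stdNormalCDF 0 - stdNormalCDF (-x)) / x) (𝓝[≠] (0:ℝ))
      (𝓝 (stdNormalPDF 0)) := by
    have hslope := hasDerivAt_iff_tendsto_slope.mp hasDerivAt_stdNormalCDF
    have := hslope.comp hnegmap
    refine this.congr ?_
    intro x
    show slope stdNormalCDF 0 (-x) = _
    rw [slope_def_field, show -x - (0:ℝ) = -x by ring, div_neg, ← neg_div, neg_sub]
  -- piece 2
  have h2 : Tendsto (fun x : ℝ => (Real.exp (-x ^ 2 / 2) - 1) / x ^ 2) (𝓝[≠] (0:ℝ))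
      (𝓝 (-(1/2 : ℝ))) := by
    have hexp : HasDerivAt Real.exp 1 0 := by simpa using Real.hasDerivAt_exp 0
    have hslope := hasDerivAt_iff_tendsto_slope.mp hexp
    have hsq : Tendsto (fun x : ℝ => -x ^ 2 / 2) (𝓝[≠] (0:ℝ)) (𝓝[≠] (0:ℝ)) := by
      rw [tendsto_nhdsWithin_iff]
      constructor
      · have hcont : Continuous (fun x : ℝ => -x ^ 2 / 2) := by continuity
        have := (hcont.tendsto 0).mono_left (nhdsWithin_le_nhds (s := {(0:ℝ)}ᶜ))
        simpa using this
      · filter_upwards [self_mem_nhdsWithin] with x hx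
        have : x ≠ 0 := hx
        simp only [Set.mem_compl_iff, Set.mem_singleton_iff]
        intro h
        apply this
        have : x ^ 2 = 0 := by linarith [sq_nonneg x, (by linarith [h] : -x^2/2 = 0)]
        exact pow_eq_zero_iff (by norm_num) |>.mp this
    have hcomp := hslope.comp hsq
    have : Tendsto (fun x : ℝ => ((Real.exp (-x ^ 2 / 2) - 1) / (-x ^ 2 / 2)) * (-(1/2:ℝ)))
        (𝓝[≠] (0:ℝ)) (𝓝 (1 * (-(1/2:ℝ)))) := by
      refine Tendsto.mul_const _ ?_
      refine hcomp.congr ?_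
      intro x
      simp [Function.comp, slope_def_field, Real.exp_zero]
    rw [one_mul] at this
    refine this.congr' ?_
    filter_upwards [self_mem_nhdsWithin] with x hx
    have hx0 : x ≠ 0 := hx
    have hx2 : x ^ 2 ≠ 0 := pow_ne_zero 2 hx0
    field_simp
  -- combine: g tends to the limit
  have hglim : Tendsto g (𝓝[≠] (0:ℝ))
      (𝓝 (Δ ^ 2 * (stdNormalPDF 0 + c * (-(1/2:ℝ))))) := by
    exact (h1.add ((h2.const_mul c))).const_mul _
  have hval : Δ ^ 2 * (stdNormalPDF 0 + c * (-(1/2:ℝ)))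
      = Δ ^ 2 / (2 * Real.sqrt (2 * Real.pi)) := by
    simp only [stdNormalPDF, hc]
    rw [show (-(0:ℝ) ^ 2 / 2) = 0 by norm_num, Real.exp_zero]
    field_simp
    ring
  -- σ ↦ Δ/σ tends to 0 within ≠ 0
  have hdiv : Tendsto (fun σ : ℝ => Δ / σ) atTop (𝓝[≠] (0:ℝ)) := by
    rw [tendsto_nhdsWithin_iff]
    constructor
    · exact tendsto_const_nhds.div_atTop tendsto_id
    · filter_upwards [eventually_gt_atTop (0:ℝ)] with σ hσ
      have : (0:ℝ) < Δ / σ := div_pos hΔ hσ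
      simpa using ne_of_gt this
  have hcomp : Tendsto (fun σ : ℝ => g (Δ / σ)) atTop
      (𝓝 (Δ ^ 2 * (stdNormalPDF 0 + c * (-(1/2:ℝ))))) := hglim.comp hdiv
  rw [hval] at hcomp
  refine hcomp.congr' ?_
  filter_upwards [eventually_gt_atTop (0:ℝ)] with σ hσ
  have hσ0 : σ ≠ 0 := ne_of_gt hσ
  simp only [hg, catalyticValue, stdNormalPDF, stdNormalCDF_zero, hc]
  rw [show (-Δ / σ) = -(Δ / σ) by ring, show (-(Δ/σ)) ^ 2 = (Δ/σ)^2 by ring,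
    Real.sqrt_mul (by norm_num : (0:ℝ) ≤ 2)]
  have hs2 : Real.sqrt 2 ≠ 0 := by positivity
  have hsp : Real.sqrt Real.pi ≠ 0 := by positivity
  field_simp
  ring
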